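/- arXiv:math/9911231 — 4 statements merged into one kernel-verified Lean document; each statement's English description precedes it below -/
import Mathlib

section
/- If κ is an uncountable regular cardinal with κ^{<κ} = κ and T is a tree of cardinality κ, then there exists an equivalence relation on the set of functions from κ to 2, definable by a Σ¹₁ formula over H(κ) with T as parameter, whose number of equivalence classes equals |{κ-branches of T}| + 1. -/
/-!
Transport the tree to `κ` along a bijection `e` and let `k : κ → 2` code the set `{i | k i}`.
A downward closed chain of a tree is well-ordered, so it has order type `κ` exactly when it has
size `≥ κ` and each of its points has `< κ` predecessors. Since the subsets of `H(κ)` that are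
elements of `H(κ)` are exactly the small ones, this is first-order over `(H(κ), ∈, R)` with `R`
the set of pairs `(i, j)` with `e i < e j`. So "`f = g` both code branches, or neither does" is
first-order definable; its classes are one per branch plus the class of all non-codes.
-/

open FirstOrder Cardinal

noncomputable section

/-- The von Neumann coding of ordinals as ZF sets. -/
noncomputable def ordToZF : Ordinal.{0} → ZFSet.{0} :=
  Ordinal.lt_wf.fix fun o IH =>
    ZFSet.range fun i : o.ToType =>
      IH ((Ordinal.ToType.mk (o := o)).symm i).1 ((Ordinal.ToType.mk (o := o)).symm i).2

/-- `Hset κ` is H(κ), the collection of sets hereditarily of cardinality `< κ`. -/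
def Hset (κ : Cardinal.{0}) : Set ZFSet.{0} :=
  {x | ZFSet.Hereditarily (fun y => #y.toSet < Cardinal.lift.{1} κ) x}

/-- The set of functions from `κ` into `2`. -/
def Fn (κ : Cardinal.{0}) : Type := (Cardinal.ord κ).ToType → Bool

/-- Relation symbols: one unary symbol `S0`, and four binary symbols `∈, S1, S2, S3`. -/
def Rels : ℕ → Type
  | 1 => PUnit
  | 2 => Fin 4
  | _ => Empty

/-- The vocabulary consisting of `∈`, a unary symbol `S0` and binary symbols `S1`, `S2`, `S3`. -/
def Lang : FirstOrder.Language := ⟨fun _ => Empty, Rels⟩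

/-- The graph of `f : κ → 2`, viewed as a binary relation on sets. -/
def codeFn {κ : Cardinal.{0}} (f : Fn κ) (a b : ZFSet.{0}) : Prop :=
  ∃ i : (Cardinal.ord κ).ToType,
    a = ordToZF ((Ordinal.ToType.mk (o := Cardinal.ord κ)).symm i).1 ∧
    b = ordToZF (if f i then 1 else 0)

def binRelAux (R0 F G H : ZFSet.{0} → ZFSet.{0} → Prop) : Fin 4 → ZFSet.{0} → ZFSet.{0} → Prop
  | 0 => R0
  | 1 => F
  | 2 => G
  | 3 => H

def relMapAux {M : Type 1} (R : Set ZFSet.{0}) (toZF : M → ZFSet.{0})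
    (F G H : ZFSet.{0} → ZFSet.{0} → Prop) :
    ∀ n, Rels n → (Fin n → M) → Prop
  | 1, _, v => toZF (v 0) ∈ R
  | 2, r, v => binRelAux (fun a b => a ∈ b) F G H r (toZF (v 0)) (toZF (v 1))
  | 0, r, _ => r.elim
  | (_+3), r, _ => r.elim

/-- The structure `(H(κ), ∈, R, f, g, h)`. -/
def HStruct (κ : Cardinal.{0}) (R : Set ZFSet.{0}) (f g h : Fn κ) :
    Lang.Structure ↥(Hset κ) where
  funMap := fun e _ => e.elim
  RelMap := fun {n} r v => relMapAux R Subtype.val (codeFn f) (codeFn g) (codeFn h) n r v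

/-- `E` is a `Σ¹₁`-definable (over `H(κ)`) relation on the functions from `κ` to `2`:
there are a first-order sentence `φ` and a parameter `R ⊆ H(κ)` such that `E f g` holds
iff for some `h : κ → 2` the structure `(H(κ), ∈, R, f, g, h)` satisfies `φ`. -/
def Sigma11Def (κ : Cardinal.{0}) (E : Fn κ → Fn κ → Prop) : Prop :=
  ∃ (φ : Lang.Sentence) (R : Set ZFSet.{0}), R ⊆ Hset κ ∧
    ∀ f g : Fn κ, E f g ↔
      ∃ h : Fn κ,
        @FirstOrder.Language.Sentence.Realize Lang ↥(Hset κ) (HStruct κ R f g h) φ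

/-- `r` is a (strict) tree ordering on `α`: irreflexive, transitive, and the
predecessors of every node are well-ordered by `r`. -/
def IsTreeOrder {α : Type} (r : α → α → Prop) : Prop :=
  IsIrrefl α r ∧ IsTrans α r ∧
    ∀ t : α, IsWellOrder {s // r s t} (fun a b => r a.1 b.1)

/-- A `κ`-branch of the tree `(α, r)`: a downward-closed chain of order type `κ`. -/
def IsKBranch {α : Type} (r : α → α → Prop) (κ : Cardinal.{0}) (B : Set α) : Prop :=
  (∀ x ∈ B, ∀ y, r y x → y ∈ B) ∧
  (∀ x ∈ B, ∀ y ∈ B, x = y ∨ r x y ∨ r y x) ∧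
  Nonempty ((fun a b : ↥B => r a.1 b.1) ≃r
    ((· < ·) : (Cardinal.ord κ).ToType → (Cardinal.ord κ).ToType → Prop))

universe u

section Collapse

variable {X : Type u} (P : X → Prop)

open Classical in
def collapseOutside : Setoid X :=
  Setoid.ker fun x => if hx : P x then some (⟨x, hx⟩ : {x // P x}) else none

variable {P}

theorem collapseOutside_r_iff {x y : X} :
    (collapseOutside P).r x y ↔ (P x ∧ P y ∧ x = y) ∨ (¬P x ∧ ¬P y) := by
  classical
  change (if hx : P x then _ else _) = (if hy : P y then _ else _) ↔ _
  by_cases hx : P x <;> by_cases hy : P y <;> simp [hx, hy]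

theorem mk_quotient_collapseOutside (h : ∃ x, ¬P x) :
    #(Quotient (collapseOutside P)) = #{x // P x} + 1 := by
  classical
  have hsurj : Function.Surjective
      fun x => if hx : P x then some (⟨x, hx⟩ : {x // P x}) else none := by
    rintro (_ | ⟨x, hx⟩)
    · obtain ⟨x, hx⟩ := h
      exact ⟨x, dif_neg hx⟩
    · exact ⟨x, dif_pos hx⟩
  rw [← Cardinal.mk_option]
  exact Cardinal.mk_congr (Setoid.quotientKerEquivOfSurjective _ hsurj)

end Collapse

/-- A characterization of κ-branches that is first-order over `H(κ)`. -/
def IsLongChain {α : Type u} (r : α → α → Prop) (κ : Cardinal.{u}) (B : Set α) : Prop :=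
  (∀ x ∈ B, ∀ y, r y x → y ∈ B) ∧ (∀ x ∈ B, ∀ y ∈ B, x = y ∨ r x y ∨ r y x) ∧
    κ ≤ #B ∧ ∀ x ∈ B, #{y | r y x} < κ

theorem isLongChain_image_iff {κ : Cardinal.{u}} {β α : Type u} (e : β ≃ α)
    (r : α → α → Prop) (S : Set β) :
    IsLongChain (e ⁻¹'o r) κ S ↔ IsLongChain r κ (e '' S) := by
  have hpred (i : β) : #{j | r (e j) (e i)} = #{y | r y (e i)} :=
    Cardinal.mk_congr (e.subtypeEquiv fun _ => Iff.rfl)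
  simp only [IsLongChain, Set.forall_mem_image, ← e.forall_congr_right,
    Cardinal.mk_image_eq e.injective, e.injective.mem_set_image, e.injective.eq_iff, Order.Preimage,
    hpred]

theorem Ordinal.type_eq_ord_iff {X : Type u} (s : X → X → Prop) [IsWellOrder X s]
    (κ : Cardinal.{u}) :
    Ordinal.type s = κ.ord ↔ κ ≤ #X ∧ ∀ x, (Ordinal.typein s x).card < κ := by
  refine ⟨fun h => ⟨?_, fun x => ?_⟩, fun ⟨hle, hlt⟩ => le_antisymm ?_ ?_⟩
  · rw [← Ordinal.card_type s, h, Cardinal.card_ord]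
  · rw [← Cardinal.lt_ord, ← h]
    exact Ordinal.typein_lt_type s x
  · by_contra! hgt
    obtain ⟨x, hx⟩ := Ordinal.typein_surj s hgt
    exact (hlt x).ne (by rw [hx, Cardinal.card_ord])
  · rwa [Cardinal.ord_le, Ordinal.card_type]

theorem IsTreeOrder.wellFounded {α : Type} {r : α → α → Prop} (htree : IsTreeOrder r) :
    WellFounded r := by
  obtain ⟨-, htrans, hwo⟩ := htree
  refine ⟨fun x => ⟨_, fun y hyx => ?_⟩⟩
  have hacc (p : {s // r s x}) : Acc r p.1 :=
    (hwo x).wf.induction (C := fun p => Acc r p.1) p fun p ih =>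
      ⟨_, fun z hz => ih ⟨z, htrans.trans _ _ _ hz p.2⟩ hz⟩
  exact hacc ⟨y, hyx⟩

theorem IsTreeOrder.isWellOrder_of_isChain {α : Type} {r : α → α → Prop}
    (htree : IsTreeOrder r) {B : Set α} (hchain : ∀ x ∈ B, ∀ y ∈ B, x = y ∨ r x y ∨ r y x) :
    IsWellOrder B (fun a b => r a.1 b.1) where
  trichotomous a b hab hba := Subtype.ext ((hchain a a.2 b b.2).resolve_right (not_or.2 ⟨hab, hba⟩))
  wf := InvImage.wf Subtype.val htree.wellFounded

theorem isKBranch_iff_isLongChain {α : Type} {r : α → α → Prop} {κ : Cardinal.{0}}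
    (htree : IsTreeOrder r) {B : Set α} : IsKBranch r κ B ↔ IsLongChain r κ B := by
  refine and_congr_right fun hdown => and_congr_right fun hchain => ?_
  have := htree.isWellOrder_of_isChain hchain
  have hpred (b : B) : #{y | r y b} = (Ordinal.typein (fun a b : B => r a.1 b.1) b).card :=
    Cardinal.mk_congr
      { toFun y := ⟨⟨y, hdown b b.2 y y.2⟩, y.2⟩, invFun c := ⟨c.1, c.2⟩,
        left_inv _ := rfl, right_inv _ := rfl }
  rw [← Ordinal.type_eq, Ordinal.type_toType, Ordinal.type_eq_ord_iff]
  simp only [← hpred, Subtype.forall]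

open Classical in
theorem mk_isLongChain_codes_eq {ι α : Type} {κ : Cardinal.{0}} {r : α → α → Prop}
    (htree : IsTreeOrder r) (e : ι ≃ α) :
    #{k : ι → Bool // IsLongChain (e ⁻¹'o r) κ {i | k i = true}} =
      #{B : Set α // IsKBranch r κ B} :=
  let boolFunEquivSet : (ι → Bool) ≃ Set ι :=
    { toFun k := {i | k i = true}, invFun S i := decide (i ∈ S),
      left_inv k := by simp, right_inv S := by ext; simp }
  Cardinal.mk_congr <| (boolFunEquivSet.trans (Equiv.Set.congr e)).subtypeEquiv fun k =>
    (isLongChain_image_iff e r _).trans (isKBranch_iff_isLongChain htree).symm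

@[simp]
theorem ZFSet.toSet_eq_coe (x : ZFSet.{0}) : x.toSet = (x : Set ZFSet.{0}) := rfl

theorem ordToZF_eq_range (o : Ordinal.{0}) :
    ordToZF o = ZFSet.range fun i : o.ToType =>
      ordToZF ((Ordinal.ToType.mk (o := o)).symm i).1 := by
  rw [ordToZF, WellFounded.fix_eq]

theorem mem_ordToZF {x : ZFSet.{0}} {o : Ordinal.{0}} :
    x ∈ ordToZF o ↔ ∃ γ < o, ordToZF γ = x := by
  rw [ordToZF_eq_range, ZFSet.mem_range]
  constructor
  · rintro ⟨i, rfl⟩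
    exact ⟨_, ((Ordinal.ToType.mk (o := o)).symm i).2, rfl⟩
  · rintro ⟨γ, hγ, rfl⟩
    exact ⟨Ordinal.ToType.mk ⟨γ, hγ⟩, by simp⟩

theorem ordToZF_mem_ordToZF {γ o : Ordinal.{0}} (h : γ < o) : ordToZF γ ∈ ordToZF o :=
  mem_ordToZF.2 ⟨γ, h, rfl⟩

theorem ordToZF_injective : Function.Injective ordToZF := by
  have hne : ∀ {a b : Ordinal.{0}}, a < b → ordToZF a ≠ ordToZF b := fun h he =>
    ZFSet.mem_irrefl _ (he ▸ ordToZF_mem_ordToZF h)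
  intro a b h
  by_contra hab
  exact (lt_or_gt_of_ne hab).elim (hne · h) (hne · h.symm)

theorem mk_toSet_ordToZF (o : Ordinal.{0}) :
    #(ordToZF o).toSet = Cardinal.lift.{1} o.card := by
  have : (ordToZF o).toSet = ordToZF '' Set.Iio o := by
    ext x
    simp [mem_ordToZF]
  rw [this, Cardinal.mk_image_eq_of_injOn _ _ ordToZF_injective.injOn]
  exact Cardinal.mk_Iio_ordinal o

section Hset

variable {κ : Cardinal.{0}}

theorem Hset.ext {x z : ZFSet.{0}} (hx : x ∈ Hset κ) (hz : z ∈ Hset κ)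
    (h : ∀ u ∈ Hset κ, u ∈ x ↔ u ∈ z) : x = z :=
  ZFSet.ext fun u => ⟨fun hu => (h u (hx.mem hu)).1 hu,
    fun hu => (h u (hz.mem hu)).2 hu⟩

theorem exists_mem_Hset_toSet_eq_iff {S : Set ZFSet.{0}} (hS : S ⊆ Hset κ) :
    (∃ p ∈ Hset κ, p.toSet = S) ↔ #S < Cardinal.lift.{1} κ := by
  constructor
  · rintro ⟨p, hp, rfl⟩
    exact hp.self
  · intro hsmall
    have : Small.{0} S := HasCardinalLT.small (by simpa [HasCardinalLT] using hsmall)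
    let p := ZFSet.range fun i : Shrink.{0} S => ((equivShrink S).symm i : ZFSet.{0})
    have hp : (p : Set ZFSet.{0}) = S := by
      rw [ZFSet.coe_range]
      exact ((equivShrink S).symm.surjective.range_comp Subtype.val).trans Subtype.range_coe
    refine ⟨p, ZFSet.hereditarily_iff.2 ⟨?_, fun y hy => hS ?_⟩, hp⟩
    · simpa [hp] using hsmall
    · rwa [← hp]

theorem pair_mem_Hset (hκ : Cardinal.aleph0 < κ) {a b : ZFSet.{0}}
    (ha : a ∈ Hset κ) (hb : b ∈ Hset κ) : ({a, b} : ZFSet.{0}) ∈ Hset κ := by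
  obtain ⟨p, hp, hpab⟩ := (exists_mem_Hset_toSet_eq_iff (S := {a, b})
    (Set.insert_subset ha (Set.singleton_subset_iff.2 hb))).2
    ((Set.toFinite _).lt_aleph0.trans (by simpa using hκ))
  convert hp
  ext u
  simp [← SetLike.mem_coe, ← hpab]

theorem Hset.eq_pair_iff (hκ : Cardinal.aleph0 < κ) {z a b : ZFSet.{0}}
    (hz : z ∈ Hset κ) (ha : a ∈ Hset κ) (hb : b ∈ Hset κ) :
    z = {a, b} ↔ ∀ u ∈ Hset κ, u ∈ z ↔ u = a ∨ u = b := by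
  refine ⟨fun h u _ => by simp [h], fun h => Hset.ext hz (pair_mem_Hset hκ ha hb) ?_⟩
  simpa using h

theorem kuratowskiPair_mem_Hset (hκ : Cardinal.aleph0 < κ) {a b : ZFSet.{0}}
    (ha : a ∈ Hset κ) (hb : b ∈ Hset κ) : ZFSet.pair a b ∈ Hset κ :=
  pair_mem_Hset hκ (by simpa using pair_mem_Hset hκ ha ha) (pair_mem_Hset hκ ha hb)

theorem ordToZF_mem_Hset {o : Ordinal.{0}} (ho : o < κ.ord) : ordToZF o ∈ Hset κ := by
  induction o using WellFoundedLT.induction with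
  | _ o IH =>
    refine ZFSet.hereditarily_iff.2 ⟨?_, fun y hy => ?_⟩
    · rw [mk_toSet_ordToZF]
      exact Cardinal.lift_lt.2 (Cardinal.lt_ord.1 ho)
    · obtain ⟨γ, hγ, rfl⟩ := mem_ordToZF.1 hy
      exact IH γ hγ (hγ.trans ho)

end Hset

section Codes

variable {κ : Cardinal.{0}}

def ordCode (κ : Cardinal.{0}) (i : κ.ord.ToType) : ZFSet.{0} :=
  ordToZF (Ordinal.ToType.mk.symm i).1

theorem ordCode_injective : Function.Injective (ordCode κ) := fun _ _ hij =>
  Ordinal.ToType.mk.symm.injective (Subtype.ext (ordToZF_injective hij))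

theorem ordCode_mem_Hset (i : κ.ord.ToType) : ordCode κ i ∈ Hset κ :=
  ordToZF_mem_Hset (Ordinal.ToType.mk.symm i).2

theorem exists_Hset_forall_mem_iff_ordCode (A : Set κ.ord.ToType) :
    (∃ p ∈ Hset κ, ∀ u ∈ Hset κ, u ∈ p ↔ ∃ i, u = ordCode κ i ∧ i ∈ A) ↔ #A < κ := by
  have hA : ordCode κ '' A ⊆ Hset κ := Set.image_subset_iff.2 fun i _ => ordCode_mem_Hset i
  refine Iff.trans ?_ ((exists_mem_Hset_toSet_eq_iff hA).trans ?_)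
  swap
  · have himage := Cardinal.mk_image_eq_lift (ordCode κ) A ordCode_injective
    rw [Cardinal.lift_id'] at himage
    rw [himage, Cardinal.lift_lt]
  refine exists_congr fun p => and_congr_right fun hp => ⟨fun H => ?_, fun H u _ => ?_⟩
  · refine Set.ext fun u => ⟨fun hu => ?_, fun hu => ?_⟩
    · obtain ⟨i, rfl, hi⟩ := (H u (hp.mem hu)).1 hu
      exact Set.mem_image_of_mem _ hi
    · obtain ⟨i, hi, rfl⟩ := hu
      exact (H _ (hA ⟨i, hi, rfl⟩)).2 ⟨i, rfl, hi⟩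
  · rw [← SetLike.mem_coe, ← ZFSet.toSet_eq_coe, H]
    simp [eq_comm, and_comm]

def relParam (κ : Cardinal.{0}) (s : κ.ord.ToType → κ.ord.ToType → Prop) : Set ZFSet.{0} :=
  {z | ∃ i j, s i j ∧ z = ZFSet.pair (ordCode κ i) (ordCode κ j)}

variable {s : κ.ord.ToType → κ.ord.ToType → Prop}

theorem relParam_subset_Hset (hκ : Cardinal.aleph0 < κ) : relParam κ s ⊆ Hset κ := by
  rintro z ⟨i, j, _, rfl⟩
  exact kuratowskiPair_mem_Hset hκ (ordCode_mem_Hset i) (ordCode_mem_Hset j)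

theorem pair_ordCode_mem_relParam {i j : κ.ord.ToType} :
    ZFSet.pair (ordCode κ i) (ordCode κ j) ∈ relParam κ s ↔ s i j := by
  refine ⟨fun ⟨i', j', hs, he⟩ => ?_, fun hs => ⟨i, j, hs, rfl⟩⟩
  obtain ⟨hi, hj⟩ := ZFSet.pair_injective he
  rwa [ordCode_injective hi, ordCode_injective hj]

theorem pair_mem_relParam_iff {u : ZFSet.{0}} {j : κ.ord.ToType} :
    ZFSet.pair u (ordCode κ j) ∈ relParam κ s ↔ ∃ i, u = ordCode κ i ∧ s i j := by
  refine ⟨fun ⟨i, j', hs, he⟩ => ?_, fun ⟨i, hu, hs⟩ => ⟨i, j, hs, hu ▸ rfl⟩⟩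
  obtain ⟨rfl, hj⟩ := ZFSet.pair_injective he
  rw [ordCode_injective hj]
  exact ⟨i, rfl, hs⟩

end Codes

open FirstOrder.Language

def memRel : Lang.Relations 2 := (0 : Fin 4)
def fRel : Lang.Relations 2 := (1 : Fin 4)
def gRel : Lang.Relations 2 := (2 : Fin 4)
def paramRel : Lang.Relations 1 := PUnit.unit

section Formulas

variable {n : ℕ}

def paramF (x : Fin n) : Lang.BoundedFormula Empty n :=
  paramRel.boundedFormula₁ &x

def relF (s : Lang.Relations 2) (x y : Fin n) : Lang.BoundedFormula Empty n :=
  s.boundedFormula₂ &x &y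

def memF (x y : Fin n) : Lang.BoundedFormula Empty n :=
  relF memRel x y

def eqF (x y : Fin n) : Lang.BoundedFormula Empty n :=
  Term.bdEqual &x &y

def upairF (w x y : Fin n) : Lang.BoundedFormula Empty n :=
  ((memF (Fin.last n) w.castSucc).iff
    (eqF (Fin.last n) x.castSucc ⊔ eqF (Fin.last n) y.castSucc)).all

def pairF (z x y : Fin n) : Lang.BoundedFormula Empty n :=
  ((memF (Fin.last n) z.castSucc).iff
    (upairF (Fin.last n) x.castSucc x.castSucc ⊔ upairF (Fin.last n) x.castSucc y.castSucc)).all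

def paramPairF (x y : Fin n) : Lang.BoundedFormula Empty n :=
  (paramF (Fin.last n) ⊓ pairF (Fin.last n) x.castSucc y.castSucc).ex

/-- `codeFn` sends `true` to the ordinal `1` and `false` to the empty set. -/
def trueAtF (s : Lang.Relations 2) (x : Fin n) : Lang.BoundedFormula Empty n :=
  (relF s x.castSucc (Fin.last n) ⊓ (memF (Fin.last (n + 1)) (Fin.last n).castSucc).ex).ex

end Formulas

section Semantics

variable {κ : Cardinal.{0}} {R : Set ZFSet.{0}} {f g h : Fn κ} {n : ℕ}
  {v : Empty → Hset κ} {xs : Fin n → Hset κ}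

theorem realize_memF (x y : Fin n) :
    @BoundedFormula.Realize Lang (Hset κ) (HStruct κ R f g h) Empty n (memF x y) v xs ↔
      (xs x : ZFSet.{0}) ∈ (xs y : ZFSet.{0}) := Iff.rfl

theorem realize_paramF (x : Fin n) :
    @BoundedFormula.Realize Lang (Hset κ) (HStruct κ R f g h) Empty n (paramF x) v xs ↔
      (xs x : ZFSet.{0}) ∈ R := Iff.rfl

theorem realize_relF (s : Lang.Relations 2) (x y : Fin n) :
    @BoundedFormula.Realize Lang (Hset κ) (HStruct κ R f g h) Empty n (relF s x y) v xs ↔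
      @Structure.RelMap Lang (Hset κ) (HStruct κ R f g h) 2 s ![xs x, xs y] := by
  let := HStruct κ R f g h
  simp [relF, Term.realize]

theorem realize_eqF (x y : Fin n) :
    @BoundedFormula.Realize Lang (Hset κ) (HStruct κ R f g h) Empty n (eqF x y) v xs ↔
      xs x = xs y := by
  let := HStruct κ R f g h
  simp [eqF, Term.realize]

theorem realize_upairF (hκ : Cardinal.aleph0 < κ) (w x y : Fin n) :
    @BoundedFormula.Realize Lang (Hset κ) (HStruct κ R f g h) Empty n (upairF w x y) v xs ↔
      (xs w : ZFSet.{0}) = {(xs x : ZFSet.{0}), (xs y : ZFSet.{0})} := by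
  let := HStruct κ R f g h
  rw [Hset.eq_pair_iff hκ (xs w).2 (xs x).2 (xs y).2, upairF, BoundedFormula.realize_all]
  simp [realize_memF, realize_eqF, Subtype.ext_iff]

theorem realize_pairF (hκ : Cardinal.aleph0 < κ) (z x y : Fin n) :
    @BoundedFormula.Realize Lang (Hset κ) (HStruct κ R f g h) Empty n (pairF z x y) v xs ↔
      (xs z : ZFSet.{0}) = ZFSet.pair (xs x) (xs y) := by
  let := HStruct κ R f g h
  have hx := (xs x).2
  rw [ZFSet.pair, show ({(xs x : ZFSet.{0})} : ZFSet.{0}) = {(xs x : ZFSet.{0}), (xs x : ZFSet.{0})}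
    by ext; simp, Hset.eq_pair_iff hκ (xs z).2 (pair_mem_Hset hκ hx hx)
    (pair_mem_Hset hκ hx (xs y).2), pairF, BoundedFormula.realize_all]
  simp [realize_memF, realize_upairF hκ]

theorem realize_paramPairF (hκ : Cardinal.aleph0 < κ) (x y : Fin n) :
    @BoundedFormula.Realize Lang (Hset κ) (HStruct κ R f g h) Empty n (paramPairF x y) v xs ↔
      ZFSet.pair (xs x) (xs y) ∈ R := by
  let := HStruct κ R f g h
  simp only [paramPairF, BoundedFormula.realize_ex, BoundedFormula.realize_inf,
    realize_paramF, realize_pairF hκ, Fin.snoc_last, Fin.snoc_castSucc]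
  refine ⟨fun ⟨z, hzR, hz⟩ => hz ▸ hzR, fun hR => ?_⟩
  exact ⟨⟨_, kuratowskiPair_mem_Hset hκ (xs x).2 (xs y).2⟩, hR, rfl⟩

theorem realize_trueAtF (hκ : Cardinal.aleph0 < κ) (s : Lang.Relations 2) (k : Fn κ)
    (hs : ∀ a b : Hset κ,
      @Structure.RelMap Lang (Hset κ) (HStruct κ R f g h) 2 s ![a, b] ↔ codeFn k a b)
    (x : Fin n) :
    @BoundedFormula.Realize Lang (Hset κ) (HStruct κ R f g h) Empty n (trueAtF s x) v xs ↔
      ∃ i, (xs x : ZFSet.{0}) = ordCode κ i ∧ k i = true := by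
  let := HStruct κ R f g h
  simp only [trueAtF, BoundedFormula.realize_ex, BoundedFormula.realize_inf,
    realize_relF, realize_memF, hs, Fin.snoc_last, Fin.snoc_castSucc]
  constructor
  · rintro ⟨b, ⟨i, hx, hb⟩, c, hc⟩
    refine ⟨i, hx, ?_⟩
    by_contra hki
    obtain ⟨γ, hγ, -⟩ := mem_ordToZF.1 (by simpa [hki, hb] using hc)
    exact not_lt_zero hγ
  · rintro ⟨i, hx, hki⟩
    have h1 : (1 : Ordinal) < κ.ord := by
      simpa using Cardinal.lt_ord.2 (by simpa using Cardinal.one_lt_aleph0.trans hκ)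
    refine ⟨⟨ordToZF 1, ordToZF_mem_Hset h1⟩, ⟨i, hx, by simp [hki]⟩,
      ⟨ordToZF 0, ordToZF_mem_Hset (zero_lt_one.trans h1)⟩, ordToZF_mem_ordToZF zero_lt_one⟩

end Semantics

section Sentences

variable (s : Lang.Relations 2)

def downS : Lang.Sentence :=
  ((trueAtF s 0).imp ((paramPairF 1 0).imp (trueAtF s 1))).all.all

def chainS : Lang.Sentence :=
  ((trueAtF s 0).imp ((trueAtF s 1).imp (eqF 0 1 ⊔ paramPairF 0 1 ⊔ paramPairF 1 0))).all.all

def smallS : Lang.Sentence :=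
  ((memF 1 0).iff (trueAtF s 1)).all.ex

def smallPredsS : Lang.Sentence :=
  ((trueAtF s 0).imp ((memF 2 1).iff (paramPairF 2 0)).all.ex).all

def isLongChainS : Lang.Sentence :=
  downS s ⊓ chainS s ⊓ (smallS s).not ⊓ smallPredsS s

def eqS : Lang.Sentence :=
  ((trueAtF fRel 0).iff (trueAtF gRel 0)).all

def eqvS : Lang.Sentence :=
  isLongChainS fRel ⊓ isLongChainS gRel ⊓ eqS ⊔ (isLongChainS fRel).not ⊓ (isLongChainS gRel).not

end Sentences

section SentenceSemantics

variable {κ : Cardinal.{0}} {f g h k : Fn κ} {r : κ.ord.ToType → κ.ord.ToType → Prop}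
  {s : Lang.Relations 2}

theorem realize_downS (hκ : Cardinal.aleph0 < κ)
    (hs : ∀ a b : Hset κ,
      @Structure.RelMap Lang (Hset κ) (HStruct κ (relParam κ r) f g h) 2 s ![a, b] ↔
        codeFn k a b) :
    @Sentence.Realize Lang (Hset κ) (HStruct κ (relParam κ r) f g h) (downS s) ↔
      ∀ j, k j = true → ∀ i, r i j → k i = true := by
  let := HStruct κ (relParam κ r) f g h
  simp only [Sentence.Realize, Formula.Realize, downS, BoundedFormula.realize_all,
    BoundedFormula.realize_imp, realize_paramPairF hκ,
    realize_trueAtF hκ s k hs,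
    Matrix.empty_eq (default : Fin 0 → Hset κ),
    Matrix.Fin.snoc_vecEmpty, Matrix.Fin.snoc_vecCons, Matrix.cons_val_zero, Matrix.cons_val_one,
    Subtype.forall, 
    forall_exists_index, and_imp]
  refine ⟨fun H j hkj i hr => ?_, fun H _ _ _ _ j hj hkj hb => ?_⟩
  · obtain ⟨i', he, hki⟩ := H _ (ordCode_mem_Hset j) _ (ordCode_mem_Hset i) j rfl hkj
      (pair_ordCode_mem_relParam.2 hr)
    rwa [ordCode_injective he]
  · subst hj
    obtain ⟨i, rfl, hr⟩ := pair_mem_relParam_iff.1 hb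
    exact ⟨i, rfl, H j hkj i hr⟩

theorem realize_chainS (hκ : Cardinal.aleph0 < κ)
    (hs : ∀ a b : Hset κ,
      @Structure.RelMap Lang (Hset κ) (HStruct κ (relParam κ r) f g h) 2 s ![a, b] ↔
        codeFn k a b) :
    @Sentence.Realize Lang (Hset κ) (HStruct κ (relParam κ r) f g h) (chainS s) ↔
      ∀ i, k i = true → ∀ j, k j = true → i = j ∨ r i j ∨ r j i := by
  let := HStruct κ (relParam κ r) f g h
  simp only [Sentence.Realize, Formula.Realize, chainS, BoundedFormula.realize_all,
    BoundedFormula.realize_imp, BoundedFormula.realize_sup,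
    realize_eqF, realize_paramPairF hκ, realize_trueAtF hκ s k hs,
    Matrix.empty_eq (default : Fin 0 → Hset κ), Matrix.Fin.snoc_vecEmpty, Matrix.Fin.snoc_vecCons,
    Matrix.cons_val_zero, Matrix.cons_val_one, Subtype.forall, forall_exists_index, and_imp,
    Subtype.mk.injEq]
  refine ⟨fun H i hki j hkj => ?_, ?_⟩
  · rcases H _ (ordCode_mem_Hset i) _ (ordCode_mem_Hset j) i rfl hki j rfl hkj with
      (he | hr) | hr
    · exact Or.inl (ordCode_injective he)
    · exact Or.inr (Or.inl (pair_ordCode_mem_relParam.1 hr))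
    · exact Or.inr (Or.inr (pair_ordCode_mem_relParam.1 hr))
  · rintro H _ _ _ _ i rfl hki j rfl hkj
    rcases H i hki j hkj with rfl | hr | hr
    · exact Or.inl (Or.inl rfl)
    · exact Or.inl (Or.inr (pair_ordCode_mem_relParam.2 hr))
    · exact Or.inr (pair_ordCode_mem_relParam.2 hr)

theorem realize_smallS (hκ : Cardinal.aleph0 < κ)
    (hs : ∀ a b : Hset κ,
      @Structure.RelMap Lang (Hset κ) (HStruct κ (relParam κ r) f g h) 2 s ![a, b] ↔
        codeFn k a b) :
    @Sentence.Realize Lang (Hset κ) (HStruct κ (relParam κ r) f g h) (smallS s) ↔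
      #{i | k i = true} < κ := by
  let := HStruct κ (relParam κ r) f g h
  rw [← exists_Hset_forall_mem_iff_ordCode]
  simp only [Sentence.Realize, Formula.Realize, smallS, BoundedFormula.realize_all,
    BoundedFormula.realize_ex, BoundedFormula.realize_iff, realize_memF, realize_trueAtF hκ s k hs,
    Matrix.empty_eq (default : Fin 0 → Hset κ), Matrix.Fin.snoc_vecEmpty, Matrix.Fin.snoc_vecCons,
    Matrix.cons_val_zero, Matrix.cons_val_one, Subtype.forall, Subtype.exists, exists_prop,
    Set.mem_ofPred_eq]

theorem realize_smallPredsS (hκ : Cardinal.aleph0 < κ)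
    (hs : ∀ a b : Hset κ,
      @Structure.RelMap Lang (Hset κ) (HStruct κ (relParam κ r) f g h) 2 s ![a, b] ↔
        codeFn k a b) :
    @Sentence.Realize Lang (Hset κ) (HStruct κ (relParam κ r) f g h) (smallPredsS s) ↔
      ∀ i, k i = true → #{j | r j i} < κ := by
  let := HStruct κ (relParam κ r) f g h
  simp only [← exists_Hset_forall_mem_iff_ordCode]
  simp only [Sentence.Realize, Formula.Realize, smallPredsS, BoundedFormula.realize_all,
    BoundedFormula.realize_imp, BoundedFormula.realize_ex, BoundedFormula.realize_iff,
    realize_memF, realize_paramPairF hκ, realize_trueAtF hκ s k hs,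
    Matrix.empty_eq (default : Fin 0 → Hset κ),
    Matrix.Fin.snoc_vecEmpty, Matrix.Fin.snoc_vecCons, Matrix.cons_val_zero, Matrix.cons_val_one,
    Matrix.cons_val_two, Matrix.tail_cons, Matrix.head_cons, Subtype.forall, Subtype.exists,
    forall_exists_index, and_imp, exists_prop, Set.mem_ofPred_eq]
  refine ⟨fun H i hki => ?_, fun H _ _ i hi hki => ?_⟩
  · simpa only [pair_mem_relParam_iff] using H _ (ordCode_mem_Hset i) i rfl hki
  · subst hi
    simpa only [pair_mem_relParam_iff] using H i hki

end SentenceSemantics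

section EqvSemantics

variable {κ : Cardinal.{0}} {f g h : Fn κ} {r : κ.ord.ToType → κ.ord.ToType → Prop}

theorem realize_isLongChainS (hκ : Cardinal.aleph0 < κ) {s : Lang.Relations 2} {k : Fn κ}
    (hs : ∀ a b : Hset κ,
      @Structure.RelMap Lang (Hset κ) (HStruct κ (relParam κ r) f g h) 2 s ![a, b] ↔
        codeFn k a b) :
    @Sentence.Realize Lang (Hset κ) (HStruct κ (relParam κ r) f g h) (isLongChainS s) ↔
      IsLongChain r κ {i | k i = true} := by
  let := HStruct κ (relParam κ r) f g h
  simp only [isLongChainS, Sentence.realize_inf, Sentence.realize_not, realize_downS hκ hs,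
    realize_chainS hκ hs, realize_smallS hκ hs, realize_smallPredsS hκ hs, IsLongChain, not_lt, Set.mem_ofPred_eq, and_assoc]

theorem realize_eqS (hκ : Cardinal.aleph0 < κ) :
    @Sentence.Realize Lang (Hset κ) (HStruct κ (relParam κ r) f g h) eqS ↔ f = g := by
  let := HStruct κ (relParam κ r) f g h
  simp only [Sentence.Realize, Formula.Realize, eqS, BoundedFormula.realize_all,
    BoundedFormula.realize_iff, realize_trueAtF hκ fRel f (fun _ _ => Iff.rfl),
    realize_trueAtF hκ gRel g (fun _ _ => Iff.rfl), Matrix.empty_eq (default : Fin 0 → Hset κ),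
    Matrix.Fin.snoc_vecEmpty, Matrix.cons_val_zero, Subtype.forall]
  refine ⟨fun H => funext fun i => Bool.eq_iff_iff.2 ?_, fun hfg => by simp [hfg]⟩
  simpa [ordCode_injective.eq_iff] using H _ (ordCode_mem_Hset i)

theorem realize_eqvS (hκ : Cardinal.aleph0 < κ) :
    @Sentence.Realize Lang (Hset κ) (HStruct κ (relParam κ r) f g h) eqvS ↔
      (IsLongChain r κ {i | f i = true} ∧ IsLongChain r κ {i | g i = true} ∧ f = g) ∨
        (¬IsLongChain r κ {i | f i = true} ∧ ¬IsLongChain r κ {i | g i = true}) := by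
  let := HStruct κ (relParam κ r) f g h
  simp only [eqvS, Sentence.realize_sup, Sentence.realize_inf, Sentence.realize_not,
    realize_isLongChainS hκ (s := fRel) (k := f) fun _ _ => Iff.rfl,
    realize_isLongChainS hκ (s := gRel) (k := g) fun _ _ => Iff.rfl, realize_eqS hκ, and_assoc]

end EqvSemantics

theorem sigma11_eq_rel_of_tree_general (κ : Cardinal.{0}) (hℵ : Cardinal.aleph0 < κ)
    (α : Type) (r : α → α → Prop) (htree : IsTreeOrder r) (hcard : #α = κ) :
    ∃ E : Setoid (Fn κ), Sigma11Def κ (fun f g => E.r f g) ∧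
      #(Quotient E) = #{B : Set α // IsKBranch r κ B} + 1 := by
  obtain ⟨e⟩ : Nonempty (κ.ord.ToType ≃ α) := Cardinal.eq.1 (by simp [hcard])
  set IsBranchCode : Fn κ → Prop := fun k => IsLongChain (e ⁻¹'o r) κ {i | k i = true}
  have hempty : ¬IsBranchCode fun _ => false := fun h => by
    simpa using hℵ.trans_le h.2.2.1
  refine ⟨collapseOutside IsBranchCode,
    ⟨eqvS, relParam κ (e ⁻¹'o r), relParam_subset_Hset hℵ, fun f g => ?_⟩, ?_⟩
  · beta_reduce
    rw [collapseOutside_r_iff]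
    -- `eqvS` does not mention `h`, so any witness will do
    exact ⟨fun H => ⟨f, (realize_eqvS hℵ).2 H⟩, fun ⟨_, H⟩ => (realize_eqvS hℵ).1 H⟩
  · exact (mk_quotient_collapseOutside ⟨_, hempty⟩).trans
      (congrArg (· + 1) (mk_isLongChain_codes_eq htree e))

/-- If `κ` is an uncountable regular cardinal with `κ^{<κ} = κ` and `T` is a tree of
cardinality `κ`, then there is an equivalence relation on `κ → 2` which is
`Σ¹₁`-definable over `H(κ)` and has exactly `|Br_κ(T)| + 1` equivalence classes. -/
theorem sigma11_eq_rel_of_tree (κ : Cardinal.{0}) (hℵ : Cardinal.aleph0 < κ)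
    (hreg : κ.IsRegular) (hpow : κ ^< κ = κ)
    (α : Type) (r : α → α → Prop) (htree : IsTreeOrder r) (hcard : #α = κ) :
    ∃ E : Setoid (Fn κ), Sigma11Def κ (fun f g => E.r f g) ∧
      #(Quotient E) = #{B : Set α // IsKBranch r κ B} + 1 :=
  sigma11_eq_rel_of_tree_general κ hℵ α r htree hcard

end
end

section
/- Let κ be regular with κ^{<κ} = κ, let γ ≤ κ, and suppose for each i < γ there is a tree T_i of cardinality ≤ κ with exactly χ_i many κ-branches. Then there exists a tree T of cardinality ≤ κ with exactly ⋃_{i<γ} χ_i many κ-branches. -/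
open Cardinal

/-!
The disjoint union of the trees `T i` over a set `S` of indices is again a tree of size at most
`#S * κ ≤ κ`, and its `κ`-branches are exactly the branches of the individual `T i`, since a branch
is a nonempty chain and so lies in a single summand. Hence it has `∑ i ∈ S, χ i` branches, and it
remains to choose `S` with this sum equal to `⨆ i, χ i`: a single index if the supremum is attained,
and otherwise one index for each value of `χ`, of which there are at most `⨆ i, χ i`, an infinite
cardinal.
-/

open Set Function
open scoped InitialSeg

theorem Cardinal.exists_sum_eq_iSup {ι : Type u} (c : ι → Cardinal.{u}) :
    ∃ s : Set ι, (sum fun i : s => c i) = ⨆ i, c i := by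
  rcases isEmpty_or_nonempty ι with hι | hι
  · exact ⟨∅, by rw [ciSup_of_empty]; exact mk_eq_zero _⟩
  have hbdd : BddAbove (range c) := bddAbove_of_small
  by_cases hmax : ∃ i, c i = ⨆ i, c i
  · obtain ⟨i, hi⟩ := hmax
    refine ⟨{i}, ?_⟩
    rw [← hi, ← one_mul (c i), ← mk_singleton i, ← sum_const']
    congr! with ⟨j, rfl⟩
  -- Otherwise `⨆ i, c i` is a limit cardinal: sum over one representative of each value of `c`.
  let s := range fun i => invFun c (c i)
  have hc : ∀ i, c (invFun c (c i)) = c i := fun i => invFun_eq ⟨i, rfl⟩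
  have hinj : InjOn c s := by
    rintro _ ⟨i, rfl⟩ _ ⟨j, rfl⟩ h
    rw [hc, hc] at h
    simp only [h]
  have hlt : ∀ i, c i < ⨆ i, c i := fun i =>
    (le_ciSup hbdd i).lt_of_ne fun h => hmax ⟨i, h⟩
  have hs : #s ≤ ⨆ i, c i := by
    let f : s → (⨆ i, c i).ord.ToType := fun j =>
      Ordinal.ToType.mk ⟨(c j).ord, ord_lt_ord.2 (hlt j)⟩
    have hf : Injective f := fun j k h => Subtype.ext <| hinj j.2 k.2 <| ord_injective <|
      congrArg Subtype.val (Ordinal.ToType.mk.injective h)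
    simpa using mk_le_of_injective hf
  have hℵ : ℵ₀ ≤ ⨆ i, c i := aleph0_le_of_isSuccLimit <|
    by_contra fun h => hmax (exists_eq_ciSup_of_not_isSuccLimit hbdd h)
  refine ⟨s, le_antisymm ?_ ?_⟩
  · calc (sum fun i : s => c i) ≤ sum fun _ : s => ⨆ i, c i :=
          sum_le_sum _ _ fun j => le_ciSup hbdd j
      _ = #s * ⨆ i, c i := sum_const' _ _
      _ ≤ (⨆ i, c i) * ⨆ i, c i := mul_le_mul' hs le_rfl
      _ = ⨆ i, c i := mul_eq_self hℵ
  · exact ciSup_le' fun i => hc i ▸ le_sum (fun j : s => c j) ⟨_, mem_range_self i⟩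

section RelEmbedding

variable {α β : Type*} {r : α → α → Prop} {s : β → β → Prop}

noncomputable def RelEmbedding.subrelImage (f : r ↪r s) (B : Set α) :
    Subrel r (· ∈ B) ≃r Subrel s (· ∈ f '' B) :=
  ⟨Equiv.Set.image f B f.injective, f.map_rel_iff⟩

theorem InitialSeg.image_setOf_rel (f : r ≼i s) (a : α) :
    f '' {b | r b a} = {y | s y (f a)} := by
  ext y
  simp [f.exists_eq_iff_rel, and_comm]

theorem InitialSeg.isWellOrder_subrel (f : r ≼i s) (a : α)
    [IsWellOrder _ (Subrel r (r · a))] : IsWellOrder _ (Subrel s (s · (f a))) := by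
  have e : Subrel r (r · a) ≃r Subrel s (s · (f a)) := by
    have e := (f : r ↪r s).subrelImage {b | r b a}
    rwa [InitialSeg.coe_coe_fn, f.image_setOf_rel] at e
  exact e.symm.toRelEmbedding.isWellOrder

end RelEmbedding

section Branches

variable {α β : Type} {r : α → α → Prop} {s : β → β → Prop} {κ : Cardinal.{0}}

theorem IsKBranch.nonempty (hκ : κ ≠ 0) {B : Set α} (hB : IsKBranch r κ B) : B.Nonempty := by
  obtain ⟨e⟩ := hB.2.2
  have : Nonempty κ.ord.ToType := Ordinal.nonempty_toType_iff.2 (ord_eq_zero.not.2 hκ)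
  exact ⟨_, (e.symm (Classical.arbitrary _)).2⟩

theorem InitialSeg.isKBranch_image_iff (f : r ≼i s) {B : Set α} :
    IsKBranch s κ (f '' B) ↔ IsKBranch r κ B := by
  refine and_congr ⟨fun h x hx y hy => ?_, fun h => ?_⟩
    (and_congr ?_ ⟨fun ⟨e⟩ => ?_, fun ⟨e⟩ => ?_⟩)
  · exact f.injective.mem_set_image.1 (h _ (mem_image_of_mem f hx) _ (f.map_rel_iff.2 hy))
  · rintro _ ⟨x, hx, rfl⟩ y hy
    obtain ⟨z, rfl, hz⟩ := f.exists_eq_iff_rel.1 hy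
    exact mem_image_of_mem f (h x hx z hz)
  · simp only [forall_mem_image, f.inj, f.map_rel_iff]
  · exact ⟨((f : r ↪r s).subrelImage B).trans e⟩
  · exact ⟨((f : r ↪r s).subrelImage B).symm.trans e⟩

end Branches

section Sigma

variable {J : Type*} {δ : J → Type*} (r : ∀ j, δ j → δ j → Prop)

def InitialSeg.sigmaMk (j : J) : r j ≼i Sigma.Lex emptyRelation r where
  toFun := Sigma.mk j
  inj' := sigma_mk_injective
  map_rel_iff' := by
    refine ⟨fun h => ?_, Sigma.Lex.right _ _⟩
    cases h with
    | left _ _ h => exact h.elim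
    | right _ _ h => exact h
  mem_range_of_rel' := by
    rintro a _ (⟨_, _, h⟩ | ⟨b, _, -⟩)
    · exact h.elim
    · exact mem_range_self b

@[simp]
theorem InitialSeg.coe_sigmaMk (j : J) : ⇑(InitialSeg.sigmaMk r j) = Sigma.mk j :=
  rfl

variable {r}

theorem Sigma.Lex.fst_eq_of_emptyRelation {x y : Σ j, δ j}
    (h : Sigma.Lex emptyRelation r x y) : x.1 = y.1 := by
  cases h with
  | left _ _ h => exact h.elim
  | right => rfl

end Sigma

section SigmaTree

variable {J : Type} {δ : J → Type} {r : ∀ j, δ j → δ j → Prop} {κ : Cardinal.{0}}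

theorem isTreeOrder_sigmaLex (h : ∀ j, IsTreeOrder (r j)) :
    IsTreeOrder (Sigma.Lex emptyRelation r) := by
  have : ∀ j, Std.Irrefl (r j) := fun j => (h j).1
  have : ∀ j, IsTrans _ (r j) := fun j => (h j).2.1
  have : IsTrans J emptyRelation := ⟨fun _ _ _ h => h.elim⟩
  refine ⟨inferInstance, inferInstance, ?_⟩
  rintro ⟨j, a⟩
  have : IsWellOrder _ (Subrel (r j) (r j · a)) := (h j).2.2 a
  exact (InitialSeg.sigmaMk r j).isWellOrder_subrel a

theorem IsKBranch.exists_eq_image_sigmaMk (hκ : κ ≠ 0) {B : Set (Σ j, δ j)}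
    (hB : IsKBranch (Sigma.Lex emptyRelation r) κ B) :
    ∃ j, ∃ B' : Set (δ j), IsKBranch (r j) κ B' ∧ Sigma.mk j '' B' = B := by
  obtain ⟨x, hx⟩ := hB.nonempty hκ
  have hsub : B ⊆ range (Sigma.mk x.1) := by
    rintro ⟨j, b⟩ hb
    obtain rfl : j = x.1 := by
      rcases hB.2.1 _ hb x hx with h | h | h
      · exact congrArg Sigma.fst h
      · exact h.fst_eq_of_emptyRelation
      · exact h.fst_eq_of_emptyRelation.symm
    exact mem_range_self b
  refine ⟨x.1, Sigma.mk x.1 ⁻¹' B, ?_, image_preimage_eq_of_subset hsub⟩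
  rwa [← (InitialSeg.sigmaMk r x.1).isKBranch_image_iff, InitialSeg.coe_sigmaMk,
    image_preimage_eq_of_subset hsub]

theorem mk_isKBranch_sigmaLex (hκ : κ ≠ 0) :
    #{B // IsKBranch (Sigma.Lex emptyRelation r) κ B} =
      sum fun j => #{B : Set (δ j) // IsKBranch (r j) κ B} := by
  rw [← mk_sigma]
  refine (mk_congr (Equiv.ofBijective (fun p => ⟨Sigma.mk p.1 '' p.2.1,
    (InitialSeg.sigmaMk r p.1).isKBranch_image_iff.2 p.2.2⟩) ⟨?_, ?_⟩)).symm
  · rintro ⟨j, B, hB⟩ ⟨k, C, hC⟩ h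
    have h : Sigma.mk j '' B = Sigma.mk k '' C := congrArg Subtype.val h
    obtain ⟨b, hb⟩ := hB.nonempty hκ
    obtain ⟨c, -, hcb⟩ : (⟨j, b⟩ : Σ j, δ j) ∈ Sigma.mk k '' C := h ▸ mem_image_of_mem _ hb
    obtain rfl : k = j := congrArg Sigma.fst hcb
    obtain rfl : B = C := image_injective.2 sigma_mk_injective h
    rfl
  · rintro ⟨B, hB⟩
    obtain ⟨j, B', hB', rfl⟩ := hB.exists_eq_image_sigmaMk hκ
    exact ⟨⟨j, B', hB'⟩, rfl⟩

end SigmaTree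

theorem tree_branches_union_general (κ : Cardinal.{0}) (hℵ : Cardinal.aleph0 < κ)
    (ι : Type) (hι : #ι ≤ κ) (α : ι → Type) (r : ∀ i, α i → α i → Prop)
    (htree : ∀ i, IsTreeOrder (r i)) (hcard : ∀ i, #(α i) ≤ κ)
    (χ : ι → Cardinal.{0}) (hbr : ∀ i, #{B : Set (α i) // IsKBranch (r i) κ B} = χ i) :
    ∃ (β : Type) (s : β → β → Prop), IsTreeOrder s ∧ #β ≤ κ ∧
      #{B : Set β // IsKBranch s κ B} = ⨆ i, χ i := by
  obtain ⟨S, hS⟩ := Cardinal.exists_sum_eq_iSup χ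
  refine ⟨Σ i : S, α i, Sigma.Lex emptyRelation fun i => r i,
    isTreeOrder_sigmaLex fun i => htree i, ?_, ?_⟩
  · calc #(Σ i : S, α i) = sum fun i : S => #(α i) := mk_sigma _
      _ ≤ sum fun _ : S => κ := sum_le_sum _ _ fun i => hcard i
      _ = #S * κ := sum_const' _ _
      _ ≤ κ * κ := mul_le_mul' ((mk_set_le S).trans hι) le_rfl
      _ = κ := mul_eq_self hℵ.le
  · rw [mk_isKBranch_sigmaLex (aleph0_pos.trans hℵ).ne', ← hS]
    simp only [hbr]

/-- If `γ ≤ κ` (here: `#ι ≤ κ`) and for each `i` there is a tree of cardinality `≤ κ` with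
exactly `χ i` many `κ`-branches, then there is a tree of cardinality `≤ κ` with exactly
`⋃ i, χ i` many `κ`-branches. -/
theorem tree_branches_union (κ : Cardinal.{0}) (hℵ : Cardinal.aleph0 < κ)
    (hreg : κ.IsRegular) (hpow : κ ^< κ = κ)
    (ι : Type) (hι : #ι ≤ κ) (α : ι → Type) (r : ∀ i, α i → α i → Prop)
    (htree : ∀ i, IsTreeOrder (r i)) (hcard : ∀ i, #(α i) ≤ κ)
    (χ : ι → Cardinal.{0}) (hbr : ∀ i, #{B : Set (α i) // IsKBranch (r i) κ B} = χ i) :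
    ∃ (β : Type) (s : β → β → Prop), IsTreeOrder s ∧ #β ≤ κ ∧
      #{B : Set β // IsKBranch s κ B} = ⨆ i, χ i :=
  tree_branches_union_general κ hℵ ι hι α r htree hcard χ hbr
end

section
/- Let κ be regular with κ^{<κ} = κ, let γ < κ, and suppose for each i < γ there is a tree T_i of cardinality ≤ κ with exactly χ_i many κ-branches. Then there exists a tree T of cardinality ≤ κ with exactly |∏_{i<γ} χ_i| many κ-branches. -/
open Cardinal

/-!
Put at level `o` of the product tree the tuples of level-`o` nodes of the factors, ordered
coordinatewise. Since a `κ`-branch is the same as a downward closed chain meeting exactly the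
levels below `κ`, the coordinate projections of a `κ`-branch of the product are `κ`-branches of
the factors, and conversely the tuples drawn from given `κ`-branches form a `κ`-branch of the
product; the two constructions are mutually inverse. The product tree has at most `κ` nodes: a
node is determined by its level when `ι` is empty, and otherwise by its tuple of nodes, of which
there are at most `κ ^ #ι ≤ κ ^< κ = κ`.
-/

open Ordinal Set

namespace IsTreeOrder

variable {α : Type} {r : α → α → Prop}

theorem isWellOrder_pred (ht : IsTreeOrder r) (x : α) :
    IsWellOrder {y // r y x} (Subrel r (r · x)) :=
  ht.2.2 x

noncomputable def height (ht : IsTreeOrder r) (x : α) : Ordinal.{0} :=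
  @type {y // r y x} (Subrel r (r · x)) (ht.isWellOrder_pred x)

theorem height_eq_typein (ht : IsTreeOrder r) {x : α} {β : Type} {s : β → β → Prop}
    [IsWellOrder β s] {b : β} (e : Subrel r (r · x) ≃r Subrel s (s · b)) :
    ht.height x = typein s b := by
  have := ht.isWellOrder_pred x
  rw [← type_subrel]
  exact e.ordinalType_congr

theorem height_val_eq_typein (ht : IsTreeOrder r) {x : α} (y : {y // r y x}) :
    ht.height y.1 = @typein _ (Subrel r (r · x)) (ht.isWellOrder_pred x) y :=
  have := ht.isWellOrder_pred x
  ht.height_eq_typein ⟨⟨fun z => ⟨⟨z.1, ht.2.1.trans _ _ _ z.2 y.2⟩, z.2⟩,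
    fun z => ⟨z.1.1, z.2⟩, fun _ => rfl, fun _ => rfl⟩, Iff.rfl⟩

theorem height_lt (ht : IsTreeOrder r) {x y : α} (h : r x y) : ht.height x < ht.height y := by
  have := ht.isWellOrder_pred y
  rw [ht.height_val_eq_typein ⟨x, h⟩]
  exact typein_lt_type _ _

theorem exists_rel_height_eq (ht : IsTreeOrder r) {x : α} {o : Ordinal} (h : o < ht.height x) :
    ∃ y, r y x ∧ ht.height y = o := by
  have := ht.isWellOrder_pred x
  obtain ⟨y, rfl⟩ := typein_surj _ h
  exact ⟨y.1, y.2, ht.height_val_eq_typein y⟩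

theorem comparable_of_rel (ht : IsTreeOrder r) {x y t : α} (hx : r x t) (hy : r y t) :
    x = y ∨ r x y ∨ r y x := by
  have := ht.isWellOrder_pred t
  rcases trichotomous_of (Subrel r (r · t)) ⟨x, hx⟩ ⟨y, hy⟩ with h | h | h
  · exact Or.inr (Or.inl h)
  · exact Or.inl (congrArg Subtype.val h)
  · exact Or.inr (Or.inr h)

theorem eq_of_height_eq (ht : IsTreeOrder r) {x y : α} (hc : x = y ∨ r x y ∨ r y x)
    (h : ht.height x = ht.height y) : x = y := by
  rcases hc with hxy | hxy | hxy
  · exact hxy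
  · exact absurd h (ht.height_lt hxy).ne
  · exact absurd h (ht.height_lt hxy).ne'

theorem rel_of_height_lt (ht : IsTreeOrder r) {x y : α} (hc : x = y ∨ r x y ∨ r y x)
    (h : ht.height x < ht.height y) : r x y := by
  rcases hc with rfl | hxy | hxy
  · exact absurd h (lt_irrefl _)
  · exact hxy
  · exact absurd h (ht.height_lt hxy).not_gt

theorem height_eq_typein_of_relIso (ht : IsTreeOrder r) {B : Set α}
    (hB : ∀ x ∈ B, ∀ y, r y x → y ∈ B) {β : Type} {s : β → β → Prop} [IsWellOrder β s]
    (e : Subrel r (· ∈ B) ≃r s) (x : B) :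
    ht.height x = typein s (e x) :=
  ht.height_eq_typein
    { toFun := fun y => ⟨e ⟨y.1, hB x x.2 y.1 y.2⟩, e.map_rel_iff.2 y.2⟩
      invFun := fun c => ⟨(e.symm c.1).1, by
        have hc : s (e (e.symm c.1)) (e x) := by rw [e.apply_symm_apply]; exact c.2
        exact e.map_rel_iff.1 hc⟩
      left_inv := fun y => by simp
      right_inv := fun c => by simp
      map_rel_iff' := e.map_rel_iff }

theorem isKBranch_iff (ht : IsTreeOrder r) {κ : Cardinal.{0}} {B : Set α} :
    IsKBranch r κ B ↔ (∀ x ∈ B, ∀ y, r y x → y ∈ B) ∧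
      (∀ x ∈ B, ∀ y ∈ B, x = y ∨ r x y ∨ r y x) ∧ ht.height '' B = Iio κ.ord := by
  constructor
  · rintro ⟨hdown, hchain, ⟨e⟩⟩
    refine ⟨hdown, hchain, ?_⟩
    have hheight : ht.height '' B = range (typein (α := κ.ord.ToType) (· < ·)) := by
      rw [image_eq_range, ← e.surjective.range_comp]
      exact congrArg range (funext (ht.height_eq_typein_of_relIso hdown e))
    ext o
    rw [hheight, mem_range_typein_iff, type_toType, mem_Iio]
  · rintro ⟨hdown, hchain, hheight⟩
    refine ⟨hdown, hchain, ⟨RelIso.trans ?_ ToType.mk.toRelIsoLT⟩⟩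
    have hlt (x : B) : ht.height x < κ.ord := by
      rw [← mem_Iio, ← hheight]; exact mem_image_of_mem _ x.2
    refine ⟨Equiv.ofBijective (fun x => ⟨ht.height x, hlt x⟩) ⟨?_, ?_⟩, ?_⟩
    · intro x y h
      exact Subtype.ext (ht.eq_of_height_eq (hchain x x.2 y y.2) (congrArg Subtype.val h))
    · rintro ⟨o, ho⟩
      rw [← hheight] at ho
      obtain ⟨x, hx, rfl⟩ := ho
      exact ⟨⟨x, hx⟩, rfl⟩
    · intro x y
      exact ⟨fun h => ht.rel_of_height_lt (hchain x x.2 y y.2) h, ht.height_lt⟩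

theorem height_lt_ord (ht : IsTreeOrder r) {κ : Cardinal.{0}} {B : Set α} (hB : IsKBranch r κ B)
    {x : α} (hx : x ∈ B) : ht.height x < κ.ord := by
  rw [← mem_Iio, ← (ht.isKBranch_iff.1 hB).2.2]
  exact mem_image_of_mem _ hx

theorem exists_mem_height_eq (ht : IsTreeOrder r) {κ : Cardinal.{0}} {B : Set α}
    (hB : IsKBranch r κ B) {o : Ordinal} (ho : o < κ.ord) : ∃ x ∈ B, ht.height x = o := by
  rwa [← mem_Iio, ← (ht.isKBranch_iff.1 hB).2.2] at ho

end IsTreeOrder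

section ProductTree

variable {ι : Type} {α : ι → Type} {r : ∀ i, α i → α i → Prop}

/-- The `level` coordinate is redundant when `ι` is nonempty; it makes the empty product a
single `κ`-chain. -/
@[ext]
structure TreeProd (κ : Cardinal.{0}) (ht : ∀ i, IsTreeOrder (r i)) where
  level : κ.ord.ToType
  node : ∀ i, α i
  height_node : ∀ i, (ht i).height (node i) = typein (α := κ.ord.ToType) (· < ·) level

namespace TreeProd

variable {κ : Cardinal.{0}} {ht : ∀ i, IsTreeOrder (r i)}

def Rel (p q : TreeProd κ ht) : Prop :=
  p.level < q.level ∧ ∀ i, r i (p.node i) (q.node i)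

theorem rel_of_level_lt {p q : TreeProd κ ht}
    (hc : ∀ i, p.node i = q.node i ∨ r i (p.node i) (q.node i) ∨ r i (q.node i) (p.node i))
    (h : p.level < q.level) : Rel p q := by
  refine ⟨h, fun i => (ht i).rel_of_height_lt (hc i) ?_⟩
  rwa [p.height_node, q.height_node, typein_lt_typein]

theorem eq_of_level_eq {p q : TreeProd κ ht}
    (hc : ∀ i, p.node i = q.node i ∨ r i (p.node i) (q.node i) ∨ r i (q.node i) (p.node i))
    (h : p.level = q.level) : p = q := by
  refine TreeProd.ext h (funext fun i => (ht i).eq_of_height_eq (hc i) ?_)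
  rw [p.height_node, q.height_node, h]

theorem nonempty_predIso (t : TreeProd κ ht) :
    Nonempty (Subrel Rel (Rel · t) ≃r Subrel (· < ·) (· < t.level)) := by
  have hlt (a : κ.ord.ToType) (ha : a < t.level) (i : ι) :
      typein (α := κ.ord.ToType) (· < ·) a < (ht i).height (t.node i) := by
    rwa [t.height_node i, typein_lt_typein]
  choose pred pred_rel height_pred using
    fun a ha i => (ht i).exists_rel_height_eq (hlt a ha i)
  have hc (q q' : {q // Rel q t}) (i : ι) := (ht i).comparable_of_rel (q.2.2 i) (q'.2.2 i)
  let toPred (a : {a // a < t.level}) : {q // Rel q t} :=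
    ⟨⟨a.1, fun i => pred a.1 a.2 i, height_pred a.1 a.2⟩, a.2, pred_rel a.1 a.2⟩
  exact ⟨⟨⟨fun q => ⟨q.1.level, q.2.1⟩, toPred,
      fun q => Subtype.ext (eq_of_level_eq (hc (toPred ⟨q.1.level, q.2.1⟩) q) rfl),
      fun _ => rfl⟩,
    fun {q q'} => ⟨rel_of_level_lt (hc q q'), fun h => h.1⟩⟩⟩

theorem isTreeOrder : IsTreeOrder (Rel (κ := κ) (ht := ht)) :=
  ⟨⟨fun _ h => lt_irrefl _ h.1⟩,
    ⟨fun _ _ _ hpq hqt =>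
      ⟨hpq.1.trans hqt.1, fun i => (ht i).2.1.trans _ _ _ (hpq.2 i) (hqt.2 i)⟩⟩,
    fun t => (nonempty_predIso t).some.toRelEmbedding.isWellOrder⟩

theorem height_eq (p : TreeProd κ ht) :
    isTreeOrder.height p = typein (α := κ.ord.ToType) (· < ·) p.level :=
  isTreeOrder.height_eq_typein (nonempty_predIso p).some

theorem height_node_eq_height (p : TreeProd κ ht) (i : ι) :
    (ht i).height (p.node i) = isTreeOrder.height p := by
  rw [height_node, height_eq]

theorem mk_le (hι : #ι < κ) (hpow : κ ^< κ = κ) (hcard : ∀ i, #(α i) ≤ κ) :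
    #(TreeProd κ ht) ≤ κ := by
  rcases isEmpty_or_nonempty ι with hempty | ⟨⟨i₀⟩⟩
  · calc #(TreeProd κ ht) ≤ #κ.ord.ToType :=
          mk_le_of_injective (f := level) fun p q h => TreeProd.ext h (Subsingleton.elim _ _)
      _ = κ := mk_ord_toType κ
  · have hnode : Function.Injective (node : TreeProd κ ht → ∀ i, α i) := fun p q h => by
      refine TreeProd.ext ((typein_inj (α := κ.ord.ToType) (· < ·)).1 ?_) h
      rw [← p.height_node i₀, ← q.height_node i₀, h]
    calc #(TreeProd κ ht) ≤ #(∀ i, α i) := mk_le_of_injective hnode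
      _ = prod fun i => #(α i) := mk_pi _
      _ ≤ prod fun _ => κ := prod_le_prod _ _ hcard
      _ = κ ^ #ι := prod_const' _ _
      _ ≤ κ ^< κ := le_powerlt κ hι
      _ = κ := hpow

theorem exists_mem_pi_level_eq {b : ∀ i, Set (α i)} (hb : ∀ i, IsKBranch (r i) κ (b i))
    {o : Ordinal} (ho : o < κ.ord) :
    ∃ p : TreeProd κ ht,
      (∀ i, p.node i ∈ b i) ∧ typein (α := κ.ord.ToType) (· < ·) p.level = o := by
  choose x hx height_x using fun i => (ht i).exists_mem_height_eq (hb i) ho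
  have ho' : o < type (α := κ.ord.ToType) (· < ·) := by rwa [type_toType]
  refine ⟨⟨enum (α := κ.ord.ToType) (· < ·) ⟨o, ho'⟩, x, fun i => ?_⟩, hx, typein_enum _ _⟩
  rw [height_x, typein_enum]

theorem isKBranch_pi {b : ∀ i, Set (α i)} (hb : ∀ i, IsKBranch (r i) κ (b i)) :
    IsKBranch Rel κ {p : TreeProd κ ht | ∀ i, p.node i ∈ b i} := by
  refine isTreeOrder.isKBranch_iff.2 ⟨?_, ?_, ?_⟩
  · exact fun p hp q hqp i => (hb i).1 _ (hp i) _ (hqp.2 i)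
  · intro p hp q hq
    rcases lt_trichotomy p.level q.level with h | h | h
    · exact Or.inr (Or.inl (rel_of_level_lt (fun i => (hb i).2.1 _ (hp i) _ (hq i)) h))
    · exact Or.inl (eq_of_level_eq (fun i => (hb i).2.1 _ (hp i) _ (hq i)) h)
    · exact Or.inr (Or.inr (rel_of_level_lt (fun i => (hb i).2.1 _ (hq i) _ (hp i)) h))
  · ext o
    refine ⟨?_, fun ho => ?_⟩
    · rintro ⟨p, -, rfl⟩
      rw [height_eq]
      exact typein_lt_self p.level
    · obtain ⟨p, hp, hpo⟩ := exists_mem_pi_level_eq (ht := ht) hb ho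
      exact ⟨p, hp, (height_eq p).trans hpo⟩

theorem image_node_pi {b : ∀ i, Set (α i)} (hb : ∀ i, IsKBranch (r i) κ (b i)) (i : ι) :
    (·.node i) '' {p : TreeProd κ ht | ∀ j, p.node j ∈ b j} = b i := by
  refine Subset.antisymm (image_subset_iff.2 fun p hp => hp i) fun x hx => ?_
  obtain ⟨p, hp, hpx⟩ := exists_mem_pi_level_eq hb ((ht i).height_lt_ord (hb i) hx)
  refine ⟨p, hp, (ht i).eq_of_height_eq ((hb i).2.1 _ (hp i) _ hx) ?_⟩
  rw [height_node, hpx]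

theorem isKBranch_image_node {B : Set (TreeProd κ ht)} (hB : IsKBranch Rel κ B) (i : ι) :
    IsKBranch (r i) κ ((·.node i) '' B) := by
  obtain ⟨-, hchain, hheight⟩ := isTreeOrder.isKBranch_iff.1 hB
  refine (ht i).isKBranch_iff.2 ⟨?_, ?_, ?_⟩
  · rintro _ ⟨p, hp, rfl⟩ y hy
    have hy_lt : (ht i).height y < isTreeOrder.height p :=
      ((ht i).height_lt hy).trans_eq (height_node_eq_height p i)
    obtain ⟨q, hq, hqy⟩ :=
      isTreeOrder.exists_mem_height_eq hB (hy_lt.trans (isTreeOrder.height_lt_ord hB hp))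
    have hqp : Rel q p := isTreeOrder.rel_of_height_lt (hchain q hq p hp) (hqy ▸ hy_lt)
    refine ⟨q, hq, (ht i).eq_of_height_eq ((ht i).comparable_of_rel (hqp.2 i) hy) ?_⟩
    rw [height_node_eq_height, hqy]
  · rintro _ ⟨p, hp, rfl⟩ _ ⟨q, hq, rfl⟩
    rcases hchain p hp q hq with rfl | h | h
    · exact Or.inl rfl
    · exact Or.inr (Or.inl (h.2 i))
    · exact Or.inr (Or.inr (h.2 i))
  · rw [image_image, ← hheight]
    exact image_congr fun p _ => height_node_eq_height p i

theorem pi_image_node {B : Set (TreeProd κ ht)} (hB : IsKBranch Rel κ B) :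
    {p : TreeProd κ ht | ∀ i, p.node i ∈ (·.node i) '' B} = B := by
  refine Subset.antisymm (fun p hp => ?_) fun p hp i => mem_image_of_mem _ hp
  have hp_lt : isTreeOrder.height p < κ.ord := by
    rw [height_eq]
    exact typein_lt_self p.level
  obtain ⟨q, hq, hqp⟩ := isTreeOrder.exists_mem_height_eq hB hp_lt
  have hc (i : ι) := (isKBranch_image_node hB i).2.1 _ (mem_image_of_mem _ hq) _ (hp i)
  rw [height_eq, height_eq, typein_inj] at hqp
  exact eq_of_level_eq hc hqp ▸ hq

variable (κ ht) in
noncomputable def branchEquiv :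
    (∀ i, {B : Set (α i) // IsKBranch (r i) κ B}) ≃
      {B : Set (TreeProd κ ht) // IsKBranch Rel κ B} where
  toFun b := ⟨{p | ∀ i, p.node i ∈ (b i).1}, isKBranch_pi fun i => (b i).2⟩
  invFun B i := ⟨(·.node i) '' B.1, isKBranch_image_node B.2 i⟩
  left_inv b := funext fun i => Subtype.ext (image_node_pi (fun j => (b j).2) i)
  right_inv B := Subtype.ext (pi_image_node B.2)

end TreeProd

end ProductTree

theorem tree_branches_prod_general (κ : Cardinal.{0}) (hpow : κ ^< κ = κ)
    (ι : Type) (hι : #ι < κ) (α : ι → Type) (r : ∀ i, α i → α i → Prop)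
    (htree : ∀ i, IsTreeOrder (r i)) (hcard : ∀ i, #(α i) ≤ κ)
    (χ : ι → Cardinal.{0}) (hbr : ∀ i, #{B : Set (α i) // IsKBranch (r i) κ B} = χ i) :
    ∃ (β : Type) (s : β → β → Prop), IsTreeOrder s ∧ #β ≤ κ ∧
      #{B : Set β // IsKBranch s κ B} = Cardinal.prod χ := by
  refine ⟨TreeProd κ htree, TreeProd.Rel, TreeProd.isTreeOrder,
    TreeProd.mk_le hι hpow hcard, ?_⟩
  rw [← mk_congr (TreeProd.branchEquiv κ htree), mk_pi]
  exact congrArg Cardinal.prod (funext hbr)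

/-- If `γ < κ` (here: `#ι < κ`) and for each `i` there is a tree of cardinality `≤ κ` with
exactly `χ i` many `κ`-branches, then there is a tree of cardinality `≤ κ` with exactly
`|∏ i, χ i|` many `κ`-branches. -/
theorem tree_branches_prod (κ : Cardinal.{0}) (hℵ : Cardinal.aleph0 < κ)
    (hreg : κ.IsRegular) (hpow : κ ^< κ = κ)
    (ι : Type) (hι : #ι < κ) (α : ι → Type) (r : ∀ i, α i → α i → Prop)
    (htree : ∀ i, IsTreeOrder (r i)) (hcard : ∀ i, #(α i) ≤ κ)
    (χ : ι → Cardinal.{0}) (hbr : ∀ i, #{B : Set (α i) // IsKBranch (r i) κ B} = χ i) :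
    ∃ (β : Type) (s : β → β → Prop), IsTreeOrder s ∧ #β ≤ κ ∧
      #{B : Set β // IsKBranch s κ B} = Cardinal.prod χ :=
  tree_branches_prod_general κ hpow ι hι α r htree hcard χ hbr
end

section
/- Let κ be uncountable regular with 2^κ = κ⁺, and let Σ be a family of sequences δ̄^α = ⟨δ^α_i : i < κ⟩ (α ranging over an index set of cardinality (2^κ)⁺) such that each sequence is injective. Then there exist α ≠ β and a set I ⊆ κ such that δ^α_i = δ^β_i for all i ∈ I, and {δ^α_i : i ∈ κ ∖ I} ∩ {δ^β_i : i ∈ κ ∖ I} = ∅ (i.e., the sequences form a 'neat pair' agreeing exactly on I). -/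
/-!
Close a set `S` of values under the following operation: for every partial sequence `p`
with values in `S` that is realized by some member of the family, throw in all values of one
fixed realizer of `p`. There are at most `μ ^ κ = μ` such partial sequences over a set of size
`μ = 2 ^ κ`, and each depends on at most `κ < cof μ` values (König), so iterating the
operation `μ` times yields a closed `S` of size `μ`, with at most `μ` chosen realizers.
Since the family has more than `μ` members, some `a` is not a chosen realizer. Let `b` be the
realizer chosen for the trace of `a` on `S`: `b` agrees with `a` on `I = {i | δ a i ∈ S}`,
all values of `b` lie in `S`, and the values of `a` outside `I` do not.
-/

open Cardinal

universe u v w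

namespace Cardinal

theorem lt_cof_ord_of_power_eq {μ κ : Cardinal} (hμ : ℵ₀ ≤ μ) (h : μ ^ κ = μ) :
    κ < μ.ord.cof := by
  by_contra! hle
  have hμ0 : μ ≠ 0 := (aleph0_pos.trans_le hμ).ne'
  exact (lt_power_cof_ord hμ).not_ge ((power_le_power_left hμ0 hle).trans_eq h)

theorem mk_range_le_lift_umax {ι : Type u} {γ : Type (max u v)} (f : ι → γ) :
    #(Set.range f) ≤ lift.{v} #ι := by
  have h := mk_range_le_lift (f := f)
  rwa [lift_id'.{u, v}, lift_umax.{u, v}] at h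

end Cardinal

section TransfiniteClosure

variable {α : Type w} (F : Set α → Set α)

noncomputable def closureStage : Ordinal.{w} → Set α
  | η => ⋃ ζ < η, F (closureStage ζ)
termination_by η => η

theorem closureStage_eq (η : Ordinal.{w}) :
    closureStage F η = ⋃ ζ < η, F (closureStage F ζ) := by
  rw [closureStage]

theorem map_closureStage_subset {ζ η : Ordinal.{w}} (h : ζ < η) :
    F (closureStage F ζ) ⊆ closureStage F η := by
  rw [closureStage_eq F η]
  exact Set.subset_biUnion_of_mem (u := fun ζ => F (closureStage F ζ)) h

variable {F} {μ : Cardinal.{w}}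

theorem mk_closureStage_le (hμ : ℵ₀ ≤ μ) (hF : ∀ S : Set α, #S ≤ μ → #(F S) ≤ μ) :
    ∀ η ≤ μ.ord, #(closureStage F η) ≤ μ := by
  intro η
  induction η using WellFoundedLT.induction with
  | _ η IH =>
    intro hη
    rw [closureStage_eq]
    refine mk_biUnion_le_of_le ((Ordinal.card_le_card hη).trans_eq (card_ord μ)) hμ _
      fun ζ hζ => hF _ (IH ζ hζ (hζ.le.trans hη))

theorem map_closureStage_ord_subset (hμ : ℵ₀ ≤ μ) (hmono : Monotone F)
    (hsupp : ∀ S : Set α, ∀ x ∈ F S, ∃ T ⊆ S, #T < μ.ord.cof ∧ x ∈ F T) :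
    F (closureStage F μ.ord) ⊆ closureStage F μ.ord := by
  intro x hx
  obtain ⟨T, hTS, hT, hxT⟩ := hsupp _ x hx
  have hstage : ∀ t : T, ∃ ζ < μ.ord, t.1 ∈ F (closureStage F ζ) := by
    intro t
    simpa only [closureStage_eq F μ.ord, Set.mem_iUnion, exists_prop] using hTS t.2
  choose ζ hζ hζT using hstage
  have hlim := isSuccLimit_ord hμ
  have hsup : Order.succ (⨆ t, ζ t) < μ.ord := hlim.succ_lt (Ordinal.iSup_lt_of_lt_cof hT hζ)
  have hTstage : T ⊆ closureStage F (Order.succ (⨆ t, ζ t)) := fun t ht =>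
    map_closureStage_subset F (Order.lt_succ_of_le (Ordinal.le_iSup ζ ⟨t, ht⟩))
      (hζT ⟨t, ht⟩)
  exact map_closureStage_subset F hsup (hmono hTstage hxT)

theorem exists_map_subset_of_mk_le (hμ : ℵ₀ ≤ μ) (hmono : Monotone F)
    (hsupp : ∀ S : Set α, ∀ x ∈ F S, ∃ T ⊆ S, #T < μ.ord.cof ∧ x ∈ F T)
    (hF : ∀ S : Set α, #S ≤ μ → #(F S) ≤ μ) :
    ∃ S, F S ⊆ S ∧ #S ≤ μ :=
  ⟨_, map_closureStage_ord_subset hμ hmono hsupp, mk_closureStage_le hμ hF _ le_rfl⟩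

end TransfiniteClosure

namespace NeatPair

variable {ι : Type u} {β A : Type (max u v)} {μ : Cardinal.{max u v}}

def IsNeat (f g : ι → β) : Prop :=
  ∃ I : Set ι, (∀ i ∈ I, f i = g i) ∧ ∀ i ∉ I, ∀ j ∉ I, f i ≠ g j

/-- Partial sequences `ι ⇀ S`; `none` leaves a coordinate unconstrained. -/
def patterns (S : Set β) : Set (ι → Option β) :=
  Set.univ.pi fun _ => insert none (some '' S)

theorem patterns_mono : Monotone (patterns : Set β → Set (ι → Option β)) :=
  fun _ _ h => Set.pi_mono fun _ _ => Set.insert_subset_insert (Set.image_mono h)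

theorem mk_patterns_le (hμ : ℵ₀ ≤ μ) (hpow : μ ^ lift.{v} #ι = μ)
    {S : Set β} (hS : #S ≤ μ) : #(patterns S : Set (ι → Option β)) ≤ μ := by
  have hval : #(insert none (some '' S) : Set (Option β)) ≤ μ :=
    calc #(insert none (some '' S) : Set (Option β)) ≤ #S + 1 :=
          mk_insert_le.trans (add_le_add_left mk_image_le 1)
      _ ≤ μ := add_le_of_le hμ hS (one_le_aleph0.trans hμ)
  calc #(patterns S : Set (ι → Option β)) = #(ι → (insert none (some '' S) : Set (Option β))) :=
        mk_congr (Equiv.Set.univPi _)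
    _ ≤ μ ^ lift.{v} #ι := by
        rw [mk_arrow, lift_id', lift_umax.{u, v}]
        exact power_le_power_right hval
    _ = μ := hpow

variable (δ : A → ι → β)

open scoped Classical in
noncomputable def trace (S : Set β) (a : A) : ι → Option β :=
  fun i => if δ a i ∈ S then some (δ a i) else none

theorem trace_mem_patterns (S : Set β) (a : A) : trace δ S a ∈ patterns S := by
  intro i _
  by_cases h : δ a i ∈ S <;> simp [trace, h]

def Realizes (p : ι → Option β) (b : A) : Prop :=
  ∀ i, ∀ x ∈ p i, δ b i = x

theorem realizes_trace (S : Set β) (a : A) : Realizes δ (trace δ S a) a := by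
  intro i x hx
  by_cases h : δ a i ∈ S <;> simp_all [trace]

section Realizers

variable [Nonempty A]

noncomputable def realizer (p : ι → Option β) : A :=
  Classical.epsilon (Realizes δ p)

def realizers (S : Set β) : Set A :=
  realizer δ '' patterns S

def hull (S : Set β) : Set β :=
  ⋃ a ∈ realizers δ S, Set.range (δ a)

theorem hull_mono : Monotone (hull δ) :=
  fun _ _ h => Set.biUnion_subset_biUnion_left (Set.image_mono (patterns_mono h))

theorem exists_subset_mk_le_of_mem_hull {S : Set β} {x : β} (hx : x ∈ hull δ S) :
    ∃ T ⊆ S, #T ≤ lift.{v} #ι ∧ x ∈ hull δ T := by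
  obtain ⟨_, ⟨p, hp, rfl⟩, hx⟩ := Set.mem_iUnion₂.1 hx
  refine ⟨some ⁻¹' Set.range p, ?_, ?_, Set.mem_biUnion ⟨p, ?_, rfl⟩ hx⟩
  · rintro y ⟨i, hi⟩
    simpa [hi] using hp i trivial
  · exact (mk_preimage_of_injective _ _ (Option.some_injective _)).trans
      (mk_range_le_lift_umax p)
  · intro i _
    cases h : p i with
    | none => exact Set.mem_insert _ _
    | some y => exact Set.mem_insert_of_mem _ ⟨y, ⟨i, h⟩, rfl⟩

theorem mk_realizers_le (hμ : ℵ₀ ≤ μ) (hpow : μ ^ lift.{v} #ι = μ)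
    {S : Set β} (hS : #S ≤ μ) : #(realizers δ S) ≤ μ :=
  mk_image_le.trans (mk_patterns_le hμ hpow hS)

theorem mk_hull_le (hμ : ℵ₀ ≤ μ) (hpow : μ ^ lift.{v} #ι = μ)
    {S : Set β} (hS : #S ≤ μ) : #(hull δ S) ≤ μ := by
  have hιμ : lift.{v} #ι ≤ μ := (lt_cof_ord_of_power_eq hμ hpow).le.trans (Ordinal.cof_ord_le μ)
  calc #(hull δ S) ≤ #(realizers δ S) * ⨆ a : realizers δ S, #(Set.range (δ a)) :=
        mk_biUnion_le _ _
    _ ≤ μ * μ := by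
        refine mul_le_mul' (mk_realizers_le δ hμ hpow hS) (ciSup_le' fun a => ?_)
        exact (mk_range_le_lift_umax _).trans hιμ
    _ = μ := mul_eq_self hμ

theorem isNeat_realizer_trace {S : Set β} (hS : hull δ S ⊆ S) (a : A) :
    IsNeat (δ a) (δ (realizer δ (trace δ S a))) := by
  have hb : Realizes δ (trace δ S a) (realizer δ (trace δ S a)) :=
    Classical.epsilon_spec ⟨a, realizes_trace δ S a⟩
  refine ⟨{i | δ a i ∈ S}, fun i hi => (hb i _ (by simp [trace, hi.out])).symm, ?_⟩
  intro i hi j _ hij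
  apply hi
  rw [Set.mem_ofPred_eq, hij]
  exact hS (Set.mem_biUnion ⟨_, trace_mem_patterns δ S a, rfl⟩ ⟨j, rfl⟩)

end Realizers

theorem exists_ne_isNeat (hμ : ℵ₀ ≤ μ) (hpow : μ ^ lift.{v} #ι = μ)
    (hA : μ < #A) : ∃ a b : A, a ≠ b ∧ IsNeat (δ a) (δ b) := by
  have : Nonempty A := mk_ne_zero_iff.1 (zero_le.trans_lt hA).ne'
  obtain ⟨S, hSclosed, hS⟩ : ∃ S, hull δ S ⊆ S ∧ #S ≤ μ := by
    refine exists_map_subset_of_mk_le hμ (hull_mono δ) (fun S x hx => ?_)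
      fun S => mk_hull_le δ hμ hpow
    obtain ⟨T, hTS, hT, hxT⟩ := exists_subset_mk_le_of_mem_hull δ hx
    exact ⟨T, hTS, hT.trans_lt (lt_cof_ord_of_power_eq hμ hpow), hxT⟩
  obtain ⟨a, ha⟩ : ∃ a, a ∉ realizers δ S := by
    by_contra! h
    have hle : #A ≤ #(realizers δ S) :=
      mk_univ.symm.trans_le (mk_le_mk_of_subset fun a _ => h a)
    exact (hA.trans_le hle).not_ge (mk_realizers_le δ hμ hpow hS)
  have hab : a ≠ realizer δ (trace δ S a) :=
    fun h => ha (h ▸ ⟨_, trace_mem_patterns δ S a, rfl⟩)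
  exact ⟨a, _, hab, isNeat_realizer_trace δ hSclosed a⟩

end NeatPair

theorem neat_pair_of_large_family_general (κ : Cardinal.{0}) (hℵ : Cardinal.aleph0 < κ)
    (A : Type 1) (hA : #A = Cardinal.lift.{1} (Order.succ (2 ^ κ)))
    (δ : A → (Cardinal.ord κ).ToType → Ordinal.{0}) :
    ∃ a b : A, a ≠ b ∧ ∃ I : Set (Cardinal.ord κ).ToType,
      (∀ i ∈ I, δ a i = δ b i) ∧
      ∀ i ∉ I, ∀ j ∉ I, δ a i ≠ δ b j := by
  have hι : #(Cardinal.ord κ).ToType = κ := by rw [mk_toType, card_ord]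
  refine NeatPair.exists_ne_isNeat δ (μ := lift.{1} (2 ^ κ)) ?_ ?_ ?_
  · exact aleph0_le_lift.2 (hℵ.le.trans (cantor κ).le)
  · rw [hι, ← lift_power, ← power_mul, mul_eq_self hℵ.le]
  · rw [hA, lift_lt]
    exact Order.lt_succ _

/-- Let `κ` be uncountable regular with `2^κ = κ⁺`, and let `⟨δ^a : a ∈ A⟩` be a family of
injective `κ`-sequences of ordinals indexed by a set of cardinality `(2^κ)⁺`. Then there are
`a ≠ b` and a set `I ⊆ κ` such that the sequences `δ^a` and `δ^b` agree on `I` and their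
values outside `I` are disjoint (a "neat pair" agreeing exactly on `I`). -/
theorem neat_pair_of_large_family (κ : Cardinal.{0}) (hℵ : Cardinal.aleph0 < κ)
    (hreg : κ.IsRegular) (hch : 2 ^ κ = Order.succ κ)
    (A : Type 1) (hA : #A = Cardinal.lift.{1} (Order.succ (2 ^ κ)))
    (δ : A → (Cardinal.ord κ).ToType → Ordinal.{0})
    (hinj : ∀ a, Function.Injective (δ a)) :
    ∃ a b : A, a ≠ b ∧ ∃ I : Set (Cardinal.ord κ).ToType,
      (∀ i ∈ I, δ a i = δ b i) ∧
      ∀ i ∉ I, ∀ j ∉ I, δ a i ≠ δ b j :=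
  neat_pair_of_large_family_general κ hℵ A hA δ
end
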